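/- arXiv:1011.0276 — 2 statements merged into one kernel-verified Lean document; each statement's English description precedes it below -/
import Mathlib

section
/- For an n×n complex matrix C and indices j < i ≤ n, the alternating sum ∑_{k=j}^{i} (-1)^{k-j} Δ^{i,i+1,…,n}_{k,i+1,…,n}(C) · Δ^{j+1,…,n}_{j,…,k̂,…,n}(C) equals zero, where Δ^{rows}_{cols}(C) denotes the minor determinant of C taken on the indicated rows and columns, and k̂ means the index k is omitted from the column list j,…,n. -/
/-
The first minor `Δ^{i,…,n-1}_{k,i+1,…,n-1}` is linear in its first column `C_{·,k}`, and it
vanishes for `i < k` (repeated column), so the sum may be taken over all `k ≥ j` and becomes a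
single minor whose first column has entries `∑_{k ≥ j} (-1)^{k-j} C_{m,k} Δ^{j+1,…}_{j,…,k̂,…}`
for `m ≥ i`. Each entry is the Laplace expansion along the first row of the determinant with rows
`(m, j+1, …, n-1)` and columns `(j, …, n-1)`, which vanishes because `m > j` is a repeated row.
-/

open Matrix Finset

/-- The minor determinant `Δ^{rows}_{cols}(C)`. -/
def minorDet {R : Type*} [CommRing R] {n r : ℕ} (C : Matrix (Fin n) (Fin n) R)
    (rows cols : Fin r → Fin n) : R :=
  (C.submatrix rows cols).det

/-- The index list `(i, i+1, …, n-1)` (0-based), as a map `Fin (n - i) → Fin n`. -/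
def idxFrom {n : ℕ} (i : ℕ) : Fin (n - i) → Fin n :=
  fun l => ⟨i + l.1, by have := l.2; omega⟩

/-- The index list `(k, i+1, …, n-1)` (0-based). -/
def idxRepl {n : ℕ} (i : ℕ) (k : Fin n) : Fin (n - i) → Fin n :=
  fun l => if l.1 = 0 then k else ⟨i + l.1, by have := l.2; omega⟩

/-- The index list `(j, …, n-1)` with `k` omitted (0-based). -/
def idxOmit {n : ℕ} (j k : ℕ) : Fin (n - (j + 1)) → Fin n :=
  fun l => if j + l.1 < k then ⟨j + l.1, by have := l.2; omega⟩
    else ⟨j + l.1 + 1, by have := l.2; omega⟩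

namespace Matrix

variable {R : Type*} [CommRing R]

theorem det_updateCol_finset_sum {n α : Type*} [DecidableEq n] [Fintype n] (M : Matrix n n R)
    (j : n) (t : Finset α) (v : α → n → R) :
    (M.updateCol j (∑ a ∈ t, v a)).det = ∑ a ∈ t, (M.updateCol j (v a)).det := by
  rw [← det_transpose, ← updateRow_transpose]
  refine (detRowAlternating.map_update_sum t j v Mᵀ).trans (Finset.sum_congr rfl fun a _ => ?_)
  rw [← det_transpose (updateCol M j (v a)), ← updateRow_transpose]
  rfl

theorem sum_mul_det_submatrix_succAbove_eq_zero {N : ℕ} (B : Matrix (Fin N) (Fin (N + 1)) R)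
    (p : Fin N) :
    ∑ q : Fin (N + 1), (-1) ^ (q : ℕ) * B p q * (B.submatrix id q.succAbove).det = 0 := by
  have h : (of (Fin.cons (B p) B) : Matrix (Fin (N + 1)) (Fin (N + 1)) R).det = 0 :=
    det_zero_of_row_eq (Fin.succ_ne_zero p).symm rfl
  rwa [det_succ_row_zero] at h

end Matrix

theorem idxOmit_add_eq_succAbove {n j : ℕ} (hjn : j < n) (q : Fin (n - (j + 1) + 1)) :
    idxOmit j (j + q) = fun l => (⟨j + q.succAbove l, by omega⟩ : Fin n) := by
  funext l
  ext
  simp only [idxOmit, Fin.succAbove, Fin.lt_def, Fin.val_castSucc]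
  split_ifs <;> simp <;> omega

section

variable {R : Type*} [CommRing R] {n : ℕ} (C : Matrix (Fin n) (Fin n) R)

theorem sum_mul_minorDet_idxOmit_eq_zero (j : ℕ) (m : Fin n) (hjm : j < m) :
    ∑ k ∈ univ.filter (fun k : Fin n => j ≤ k),
      (-1) ^ ((k : ℕ) - j) * C m k * minorDet C (idxFrom (j + 1)) (idxOmit j k) = 0 := by
  have hjn : j < n := hjm.trans m.2
  let B := C.submatrix (idxFrom (j + 1)) fun q : Fin (n - (j + 1) + 1) => ⟨j + q, by omega⟩
  rw [← B.sum_mul_det_submatrix_succAbove_eq_zero ⟨m - (j + 1), by omega⟩]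
  symm
  refine sum_nbij' (fun q => ⟨j + q, by omega⟩) (fun k => ⟨k - j, by omega⟩)
    (by simp) (by simp) (fun q _ => by ext; simp) (fun k hk => by ext; simp at hk ⊢; omega)
    fun q _ => ?_
  have hm : idxFrom (j + 1) ⟨m - (j + 1), by omega⟩ = m := by ext; simp [idxFrom]; omega
  simp only [Nat.add_sub_cancel_left, minorDet, idxOmit_add_eq_succAbove hjn, B,
    submatrix_apply, hm]
  rfl

theorem minorDet_idxRepl_eq_zero_of_lt {i : ℕ} {k : Fin n} (hik : i < k) :
    minorDet C (idxFrom i) (idxRepl i k) = 0 :=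
  det_zero_of_column_eq (i := ⟨0, by have := k.2; omega⟩) (j := ⟨k - i, by have := k.2; omega⟩)
    (by rw [ne_eq, Fin.mk.injEq]; omega)
    fun a => by
      simp only [submatrix_apply, idxRepl, if_pos, if_neg (show (k : ℕ) - i ≠ 0 by omega)]
      congr 1
      ext
      simp only
      omega

theorem minorDet_idxRepl_eq_det_updateCol {i : ℕ} (hin : i < n) (k : Fin n) :
    minorDet C (idxFrom i) (idxRepl i k) =
      ((C.submatrix (idxFrom i) (idxFrom i)).updateCol ⟨0, by omega⟩
        fun a => C (idxFrom i a) k).det := by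
  unfold minorDet
  congr
  ext a b
  by_cases hb : b = ⟨0, by omega⟩
  · subst hb
    simp [idxRepl]
  · have hb' : (b : ℕ) ≠ 0 := fun h => hb (Fin.ext h)
    simp [hb, hb', idxRepl, idxFrom]

theorem sum_minorDet_idxRepl_mul_minorDet_idxOmit_eq_zero {i j : ℕ} (hji : j < i) (hin : i < n) :
    ∑ k ∈ univ.filter (fun k : Fin n => j ≤ k), (-1) ^ ((k : ℕ) - j) *
      minorDet C (idxFrom i) (idxRepl i k) * minorDet C (idxFrom (j + 1)) (idxOmit j k) = 0 := by
  set M := C.submatrix (idxFrom i) (idxFrom i)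
  set c : Fin n → R := fun k => (-1) ^ ((k : ℕ) - j) * minorDet C (idxFrom (j + 1)) (idxOmit j k)
  calc _ = ∑ k ∈ univ.filter (fun k : Fin n => j ≤ k),
        (M.updateCol ⟨0, by omega⟩ (c k • fun a => C (idxFrom i a) k)).det := by
        refine sum_congr rfl fun k _ => ?_
        rw [det_updateCol_smul, minorDet_idxRepl_eq_det_updateCol C hin]
        ring
    _ = (M.updateCol ⟨0, by omega⟩
          (∑ k ∈ univ.filter (fun k : Fin n => j ≤ k), c k • fun a => C (idxFrom i a) k)).det :=
        (det_updateCol_finset_sum _ _ _ _).symm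
    _ = 0 := by
        refine det_eq_zero_of_column_eq_zero ⟨0, by omega⟩ fun a => ?_
        rw [updateCol_self, Finset.sum_apply,
          ← sum_mul_minorDet_idxOmit_eq_zero C j (idxFrom i a) (by simp [idxFrom]; omega)]
        refine sum_congr rfl fun k _ => ?_
        simp only [c, Pi.smul_apply, smul_eq_mul]
        ring

end

/-- 0-based indices: for `j < i < n`,
`∑_{k=j}^{i} (-1)^{k-j} Δ^{i,…,n-1}_{k,i+1,…,n-1}(C) · Δ^{j+1,…,n-1}_{j,…,k̂,…,n-1}(C) = 0`. -/
theorem stmt_0 (n : ℕ) (C : Matrix (Fin n) (Fin n) ℂ) (i j : ℕ)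
    (hji : j < i) (hin : i < n) :
    ∑ k ∈ (Finset.Icc j i).attach,
      (-1 : ℂ) ^ ((k : ℕ) - j) *
        minorDet C (idxFrom i)
          (idxRepl i ⟨(k : ℕ), by have := Finset.mem_Icc.mp k.2; omega⟩) *
        minorDet C (idxFrom (j + 1)) (idxOmit j (k : ℕ)) = 0 := by
  rw [← sum_minorDet_idxRepl_mul_minorDet_idxOmit_eq_zero C hji hin,
    ← sum_subset (s₁ := univ.filter fun k : Fin n => j ≤ k ∧ k ≤ i)]
  · exact sum_bij' (fun k _ => ⟨k, by have := mem_Icc.mp k.2; omega⟩)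
      (fun k hk => ⟨k, by simpa using hk⟩) (by simp) (by simp) (by simp) (by simp) (by simp)
  · exact fun k => by simp +contextual
  · intro k hk hk'
    simp only [mem_filter, mem_univ, true_and, not_and, not_le] at hk hk'
    rw [minorDet_idxRepl_eq_zero_of_lt C (hk' hk), mul_zero, zero_mul]
end

section
/- Let P be the n×n lower-triangular matrix with entries f_{i,k} = (−1)^{n−i} t^{−1} · [Δ^{1,i+1,…,n}_{i,i+1,…,n}(C_1) · Δ^{i,i+1,…,n}_{k,i+1,…,n}(C_t)] / [Δ^{i+1,…,n}_{i+1,…,n}(C_t) · Δ^{i,…,n}_{i,…,n}(C_t)] for k ≤ i, and let Q be the n×n lower-triangular matrix with entries g_{k,i} = (−1)^{n−k} t · Δ^{i+1,…,n}_{i,…,k̂,…,n}(C_t) / Δ^{1,i+1,…,n}_{i,i+1,…,n}(C_1) for i ≤ k. Then P Q = I_n, provided all the minor determinants appearing in denominators are nonzero. -/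
open Matrix Finset

/-- `Δ^{1,i+1,…,n}_{i,i+1,…,n}(C)` (0-based: rows `(0, i+1, …, n-1)`, columns
`(i, …, n-1)`). -/
def minA {R : Type*} [CommRing R] {n : ℕ} (C : Matrix (Fin n) (Fin n) R)
    (i : Fin n) : R :=
  minorDet C (idxRepl i.1 ⟨0, by have := i.isLt; omega⟩) (idxFrom i.1)

/-- `Δ^{i,i+1,…,n}_{k,i+1,…,n}(C)`. -/
def minB {R : Type*} [CommRing R] {n : ℕ} (C : Matrix (Fin n) (Fin n) R)
    (i k : Fin n) : R :=
  minorDet C (idxFrom i.1) (idxRepl i.1 k)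

/-- `Δ^{i+1,…,n}_{i+1,…,n}(C)`. -/
def minC {R : Type*} [CommRing R] {n : ℕ} (C : Matrix (Fin n) (Fin n) R)
    (i : Fin n) : R :=
  minorDet C (idxFrom (i.1 + 1)) (idxFrom (i.1 + 1))

/-- `Δ^{i,…,n}_{i,…,n}(C)`. -/
def minD {R : Type*} [CommRing R] {n : ℕ} (C : Matrix (Fin n) (Fin n) R)
    (i : Fin n) : R :=
  minorDet C (idxFrom i.1) (idxFrom i.1)

/-- `Δ^{i+1,…,n}_{i,…,k̂,…,n}(C)`. -/
def minOmit {R : Type*} [CommRing R] {n : ℕ} (C : Matrix (Fin n) (Fin n) R)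
    (i k : Fin n) : R :=
  minorDet C (idxFrom (i.1 + 1)) (idxOmit i.1 k.1)

/-!
Up to diagonal factors, `P` is the matrix `B i k = Δ^{i,…}_{k,i+1,…}(C_t)`, which vanishes
for `k > i`, and the `j`-th column of `Q` is `ω_j k = (-1)^k Δ^{j+1,…}_{j,…,k̂,…}(C_t)` for
`k ≥ j`. Laplace expansion along the first row of `Δ^{r,j+1,…}_{j,…}(C_t)`, which has a repeated
row when `r > j`, shows that `ω_j` is orthogonal to the rows `r > j` of `C_t`; expansion along
the first column shows that the row `B i` is a combination of the rows `i, …, n-1` of `C_t`.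
Hence `B ω` is diagonal with entries `±Δ^{i,…}_{i,…} Δ^{i+1,…}_{i+1,…}`, which cancel against
the denominators.
-/

section

variable {R : Type*} [CommRing R] {n : ℕ}

lemma neg_one_pow_sub {m k : ℕ} (h : k ≤ m) : (-1 : R) ^ (m - k) = (-1) ^ k * (-1) ^ m := by
  rw [← pow_add]
  exact neg_one_pow_congr ((Nat.even_sub h).trans (Iff.comm.trans Nat.even_add.symm))

lemma minorDet_eq_sum_row {r m : ℕ} (h : r = m + 1) (M : Matrix (Fin n) (Fin n) R)
    (rows cols : Fin r → Fin n) :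
    minorDet M rows cols = ∑ c : Fin r, (-1) ^ (c : ℕ) * M (rows (Fin.cast h.symm 0)) (cols c) *
      minorDet M (rows ∘ Fin.cast h.symm ∘ Fin.succ)
        (cols ∘ Fin.cast h.symm ∘ (Fin.cast h c).succAbove) := by
  subst h
  exact det_succ_row_zero _

lemma minorDet_eq_sum_column {r m : ℕ} (h : r = m + 1) (M : Matrix (Fin n) (Fin n) R)
    (rows cols : Fin r → Fin n) :
    minorDet M rows cols = ∑ c : Fin r, (-1) ^ (c : ℕ) * M (rows c) (cols (Fin.cast h.symm 0)) *
      minorDet M (rows ∘ Fin.cast h.symm ∘ (Fin.cast h c).succAbove)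
        (cols ∘ Fin.cast h.symm ∘ Fin.succ) := by
  subst h
  exact det_succ_column_zero _

lemma idxRepl_cast_zero {i : ℕ} (h : n - i = n - (i + 1) + 1) (k : Fin n) :
    idxRepl i k (Fin.cast h.symm 0) = k := by
  simp [idxRepl]

lemma idxRepl_cast_succ {i : ℕ} (h : n - i = n - (i + 1) + 1) (k : Fin n) :
    idxRepl i k ∘ Fin.cast h.symm ∘ Fin.succ = idxFrom (i + 1) := by
  funext a
  ext
  simp [idxRepl, idxFrom]
  omega

lemma idxFrom_cast_succAbove {i : ℕ} (h : n - i = n - (i + 1) + 1) (c : Fin (n - i)) :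
    idxFrom i ∘ Fin.cast h.symm ∘ (Fin.cast h c).succAbove =
      idxOmit i (idxFrom (n := n) i c).val := by
  funext a
  ext
  by_cases hac : a.val < c.val <;>
    simp [idxFrom, idxOmit, Fin.succAbove, hac, Nat.add_assoc, Fin.lt_def]

lemma sum_idxFrom {M : Type*} [AddCommMonoid M] (j : Fin n) (f : Fin n → M) :
    ∑ c : Fin (n - j), f (idxFrom j c) = ∑ k, if j ≤ k then f k else 0 := by
  rw [← sum_filter]
  refine sum_bij (fun c _ => idxFrom j c) ?_ ?_ ?_ (fun _ _ => rfl)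
  · exact fun c _ => mem_filter.2 ⟨mem_univ _, Nat.le_add_right _ _⟩
  · intro a _ b _ hab
    ext
    simpa [idxFrom] using congrArg Fin.val hab
  · intro k hk
    refine ⟨⟨k - j, by omega⟩, mem_univ _, ?_⟩
    ext
    simp only [mem_filter, mem_univ, true_and, Fin.le_iff_val_le_val] at hk
    simp [idxFrom]
    omega

variable (C : Matrix (Fin n) (Fin n) R)

lemma minB_self (i : Fin n) : minB C i i = minD C i := by
  have h : idxRepl i.1 i = idxFrom (n := n) i.1 := by
    funext l
    ext
    by_cases hl : l.1 = 0 <;> simp [idxRepl, idxFrom, hl]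
  rw [minB, minD, h]

lemma minOmit_self (i : Fin n) : minOmit C i i = minC C i := by
  have h : idxOmit i.1 i.1 = idxFrom (n := n) (i.1 + 1) := by
    funext l
    ext
    simp [idxOmit, idxFrom]
    omega
  rw [minOmit, minC, h]

lemma minB_eq_zero_of_lt {i k : Fin n} (h : i < k) : minB C i k = 0 := by
  have hk := k.2
  refine det_zero_of_column_eq (i := ⟨0, by omega⟩) (j := ⟨k - i, by omega⟩) ?_ fun r => ?_
  · rw [Fin.lt_def] at h
    simp [Fin.ext_iff]
    omega
  · have hki : (k - i : ℕ) ≠ 0 := by rw [Fin.lt_def] at h; omega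
    simp only [submatrix_apply, idxRepl, hki, if_true, if_false]
    congr 1
    ext
    dsimp only
    omega

lemma exists_minB_eq_vecMul (i : Fin n) :
    ∃ β : Fin (n - i) → R, minB C i = β ᵥ* C.submatrix (idxFrom i) id := by
  have h : n - i = n - (i + 1) + 1 := by have := i.2; omega
  refine ⟨fun r => (-1) ^ (r : ℕ) *
    minorDet C (idxFrom i ∘ Fin.cast h.symm ∘ (Fin.cast h r).succAbove) (idxFrom (i + 1)), ?_⟩
  funext k
  rw [minB, minorDet_eq_sum_column h, idxRepl_cast_zero h, idxRepl_cast_succ h]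
  exact sum_congr rfl fun r _ => by simp only [submatrix_apply, id]; ring

lemma minorDet_idxRepl_eq_sum (j r : Fin n) :
    minorDet C (idxRepl j r) (idxFrom j) =
      ∑ c : Fin (n - j), (-1) ^ (c : ℕ) * C r (idxFrom j c) * minOmit C j (idxFrom j c) := by
  have h : n - j = n - (j + 1) + 1 := by have := j.2; omega
  rw [minorDet_eq_sum_row h, idxRepl_cast_zero h, idxRepl_cast_succ h]
  simp only [idxFrom_cast_succAbove h]
  rfl

lemma minorDet_idxRepl_eq_zero {j r : Fin n} (h : j < r) :
    minorDet C (idxRepl j r) (idxFrom j) = 0 := by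
  have hr := r.2
  refine det_zero_of_row_eq (i := ⟨0, by omega⟩) (j := ⟨r - j, by omega⟩) ?_ ?_
  · rw [Fin.lt_def] at h
    simp [Fin.ext_iff]
    omega
  · funext c
    have hrj : (r - j : ℕ) ≠ 0 := by rw [Fin.lt_def] at h; omega
    simp only [submatrix_apply, idxRepl, hrj, if_true, if_false]
    congr 2
    ext
    dsimp only
    omega

def minOmitCol (j : Fin n) : Fin n → R :=
  fun k => if j ≤ k then (-1) ^ (k : ℕ) * minOmit C j k else 0

lemma mulVec_minOmitCol_eq_zero {j r : Fin n} (h : j < r) : (C *ᵥ minOmitCol C j) r = 0 :=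
  calc (C *ᵥ minOmitCol C j) r
      = ∑ k, if j ≤ k then C r k * ((-1) ^ (k : ℕ) * minOmit C j k) else 0 := by
        simp [mulVec, dotProduct, minOmitCol, mul_ite]
    _ = ∑ c : Fin (n - j),
          C r (idxFrom j c) * ((-1) ^ (j + c : ℕ) * minOmit C j (idxFrom j c)) :=
        (sum_idxFrom j fun k => C r k * ((-1) ^ (k : ℕ) * minOmit C j k)).symm
    _ = (-1) ^ (j : ℕ) * minorDet C (idxRepl j r) (idxFrom j) := by
        rw [minorDet_idxRepl_eq_sum, mul_sum]
        exact sum_congr rfl fun c _ => by ring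
    _ = 0 := by rw [minorDet_idxRepl_eq_zero C h, mul_zero]

lemma minB_mul_minOmitCol :
    of (minB C) * (of fun k j => minOmitCol C j k) =
      diagonal fun i : Fin n => (-1) ^ (i : ℕ) * (minD C i * minC C i) := by
  ext i j
  change minB C i ⬝ᵥ minOmitCol C j = diagonal _ i j
  rw [diagonal_apply]
  rcases lt_trichotomy j i with hji | rfl | hij
  · obtain ⟨β, hβ⟩ := exists_minB_eq_vecMul C i
    have hvanish : C.submatrix (idxFrom i) id *ᵥ minOmitCol C j = 0 :=
      funext fun r => mulVec_minOmitCol_eq_zero C (lt_of_lt_of_le hji (Nat.le_add_right _ _))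
    rw [if_neg hji.ne', hβ, ← dotProduct_mulVec, hvanish, dotProduct_zero]
  · rw [if_pos rfl, dotProduct, sum_eq_single j]
    · simp [minOmitCol, minB_self, minOmit_self]
      ring
    · intro k _ hkj
      rcases lt_or_gt_of_ne hkj with hk | hk
      · simp [minOmitCol, not_le.2 hk]
      · simp [minB_eq_zero_of_lt C hk]
    · simp
  · rw [if_neg hij.ne, dotProduct]
    refine sum_eq_zero fun k _ => ?_
    rcases lt_or_ge i k with hk | hk
    · simp [minB_eq_zero_of_lt C hk]
    · simp [minOmitCol, not_le.2 (lt_of_le_of_lt hk hij)]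

end

/-- 0-based indices: with
`f_{i,k} = (-1)^{n-1-i} t⁻¹ Δ^{0,i+1,…}_{i,…}(C₁) Δ^{i,…}_{k,i+1,…}(C_t)
  / (Δ^{i+1,…}_{i+1,…}(C_t) Δ^{i,…}_{i,…}(C_t))` for `k ≤ i` and
`g_{k,i} = (-1)^{n-1-k} t Δ^{i+1,…}_{i,…,k̂,…}(C_t) / Δ^{0,i+1,…}_{i,…}(C₁)` for
`i ≤ k`, the lower triangular matrices `P = (f_{i,k})` and `Q = (g_{k,i})` satisfy
`P Q = I`, provided `t` and all minors in denominators are nonzero. -/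
theorem stmt_11 (n : ℕ) (t : ℂ) (ht : t ≠ 0) (Ct C1 : Matrix (Fin n) (Fin n) ℂ)
    (hden : ∀ i : Fin n, minA C1 i ≠ 0 ∧ minC Ct i ≠ 0 ∧ minD Ct i ≠ 0) :
    (Matrix.of fun i k : Fin n =>
        if k.1 ≤ i.1 then
          (-1 : ℂ) ^ (n - 1 - i.1) * t⁻¹ * (minA C1 i * minB Ct i k)
            / (minC Ct i * minD Ct i)
        else 0) *
      (Matrix.of fun k i : Fin n =>
        if i.1 ≤ k.1 then
          (-1 : ℂ) ^ (n - 1 - k.1) * t * minOmit Ct i k / minA C1 i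
        else 0) = 1 := by
  calc _ = (diagonal (fun i =>
            (-1) ^ (n - 1 - i.1) * t⁻¹ * minA C1 i / (minC Ct i * minD Ct i)) * of (minB Ct)) *
          ((of fun k j => minOmitCol Ct j k) *
            diagonal fun j => (-1) ^ (n - 1) * t / minA C1 j) := by
        congr 1
        · ext i k
          rw [diagonal_mul, of_apply, of_apply]
          split_ifs with hki
          · ring
          · rw [minB_eq_zero_of_lt Ct (not_le.1 hki), mul_zero]
        · ext k j
          simp only [mul_diagonal, of_apply, minOmitCol, Fin.val_fin_le]
          split_ifs
          · rw [neg_one_pow_sub (by omega)]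
            ring
          · rw [zero_mul]
    _ = diagonal fun i => (-1) ^ (n - 1 - i.1) * t⁻¹ * minA C1 i / (minC Ct i * minD Ct i) *
          ((-1) ^ (i : ℕ) * (minD Ct i * minC Ct i) * ((-1) ^ (n - 1) * t / minA C1 i)) := by
        rw [Matrix.mul_assoc, ← Matrix.mul_assoc (of _), minB_mul_minOmitCol,
          diagonal_mul_diagonal, diagonal_mul_diagonal]
    _ = 1 := by
        rw [← diagonal_one]
        congr 1
        funext i
        obtain ⟨hA, hC, hD⟩ := hden i
        rw [neg_one_pow_sub (by omega)]
        field_simp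
        rw [← pow_mul, ← pow_mul, pow_mul', pow_mul', neg_one_sq, one_pow, one_pow, one_mul]
end
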